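/- For any ν > 0, ε > 0, and k > 0 satisfying k² ≥ W(2/(πε²))/(2ν²), where W is the principal branch of the Lambert W function, one has |sgn(x) − erf(kx)| ≤ ε for all x with |x| ≥ ν. -/

import Mathlib

/-!
For `y > 0` the Gaussian tail obeys `∫_y^∞ e^{-t²} ≤ (1/y) ∫_y^∞ t e^{-t²} = e^{-y²}/(2y)`, so
`|sgn x − erf(kx)| = erfc(k|x|) ≤ e^{-y²}/(√π y)` with `y = k|x|`. After squaring, this is at most
`ε` as soon as `2/(πε²) ≤ 2y² e^{2y²}`; since `t ↦ t eᵗ` is increasing on `[0, ∞)` and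
`w eʷ = 2/(πε²)`, that follows from `w ≤ 2y²`, i.e. from `w ≤ 2k²ν²`.
-/

open MeasureTheory Real Set Filter Topology

/-- The Gauss error function. -/
noncomputable def erf (y : ℝ) : ℝ :=
  (2 / Real.sqrt Real.pi) * ∫ t in (0:ℝ)..y, Real.exp (-t ^ 2)

lemma integrable_exp_neg_sq : Integrable fun t : ℝ => exp (-t ^ 2) := by
  simpa using integrable_exp_neg_mul_sq one_pos

lemma integrable_mul_exp_neg_sq : Integrable fun t : ℝ => t * exp (-t ^ 2) := by
  simpa using integrable_mul_exp_neg_mul_sq one_pos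

lemma integral_Ioi_mul_exp_neg_sq (y : ℝ) :
    ∫ t in Ioi y, t * exp (-t ^ 2) = exp (-y ^ 2) / 2 := by
  have hderiv : ∀ t ∈ Ici y, HasDerivAt (fun t ↦ -exp (-t ^ 2) / 2) (t * exp (-t ^ 2)) t := by
    intro t _
    refine (((hasDerivAt_pow 2 t).fun_neg.exp).fun_neg.div_const 2).congr_deriv ?_
    norm_num
    ring
  have hlim : Tendsto (fun t : ℝ ↦ -exp (-t ^ 2) / 2) atTop (𝓝 0) := by
    have hsq : Tendsto (fun t : ℝ ↦ -t ^ 2) atTop atBot :=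
      tendsto_neg_atTop_atBot.comp (tendsto_pow_atTop two_ne_zero)
    simpa using (tendsto_exp_atBot.comp hsq).neg.div_const 2
  rw [integral_Ioi_of_hasDerivAt_of_tendsto' hderiv integrable_mul_exp_neg_sq.integrableOn hlim]
  ring

lemma integral_Ioi_exp_neg_sq_le {y : ℝ} (hy : 0 < y) :
    ∫ t in Ioi y, exp (-t ^ 2) ≤ exp (-y ^ 2) / (2 * y) := by
  calc ∫ t in Ioi y, exp (-t ^ 2)
      ≤ ∫ t in Ioi y, t * exp (-t ^ 2) / y := by
        refine setIntegral_mono_on integrable_exp_neg_sq.integrableOn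
          (integrable_mul_exp_neg_sq.integrableOn.div_const y) measurableSet_Ioi fun t ht ↦ ?_
        rw [le_div_iff₀ hy, mul_comm]
        exact mul_le_mul_of_nonneg_right (le_of_lt ht) (exp_pos _).le
    _ = exp (-y ^ 2) / (2 * y) := by
        rw [integral_div, integral_Ioi_mul_exp_neg_sq, div_div]

lemma erf_neg (y : ℝ) : erf (-y) = -erf y := by
  have h : ∫ t in (0:ℝ)..-y, exp (-t ^ 2) = -∫ t in (0:ℝ)..y, exp (-t ^ 2) := by
    have hreflect := intervalIntegral.integral_comp_neg (a := 0) (b := y) fun t ↦ exp (-t ^ 2)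
    simp only [neg_sq, neg_zero] at hreflect
    rw [intervalIntegral.integral_symm, ← hreflect]
  rw [erf, erf, h, mul_neg]

lemma one_sub_erf_eq {y : ℝ} (hy : 0 ≤ y) :
    1 - erf y = 2 / √π * ∫ t in Ioi y, exp (-t ^ 2) := by
  have hsplit : (∫ t in (0:ℝ)..y, exp (-t ^ 2)) + ∫ t in Ioi y, exp (-t ^ 2) = √π / 2 := by
    rw [intervalIntegral.integral_of_le hy, ← setIntegral_union (Ioc_disjoint_Ioi le_rfl)
      measurableSet_Ioi integrable_exp_neg_sq.integrableOn integrable_exp_neg_sq.integrableOn,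
      Ioc_union_Ioi_eq_Ioi hy]
    simpa using integral_gaussian_Ioi 1
  have hπ : √π ≠ 0 := by positivity
  rw [erf, eq_sub_of_add_eq hsplit]
  field_simp
  ring

lemma abs_one_sub_erf_le {y : ℝ} (hy : 0 < y) : |1 - erf y| ≤ exp (-y ^ 2) / (√π * y) := by
  have htail_nonneg : 0 ≤ ∫ t in Ioi y, exp (-t ^ 2) :=
    setIntegral_nonneg measurableSet_Ioi fun t _ ↦ (exp_pos _).le
  rw [one_sub_erf_eq hy.le, abs_of_nonneg (by positivity)]
  calc 2 / √π * ∫ t in Ioi y, exp (-t ^ 2)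
      ≤ 2 / √π * (exp (-y ^ 2) / (2 * y)) := by gcongr; exact integral_Ioi_exp_neg_sq_le hy
    _ = exp (-y ^ 2) / (√π * y) := by field_simp

lemma abs_sign_sub_erf_mul {k x : ℝ} (hx : x ≠ 0) :
    |Real.sign x - erf (k * x)| = |1 - erf (k * |x|)| := by
  rcases hx.lt_or_gt with hneg | hpos
  · rw [Real.sign_of_neg hneg, abs_of_neg hneg, mul_neg, erf_neg, ← abs_neg]
    ring_nf
  · rw [Real.sign_of_pos hpos, abs_of_pos hpos]

lemma mul_exp_le_mul_exp {a b : ℝ} (hab : a ≤ b) (hb : 0 ≤ b) : a * exp a ≤ b * exp b := by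
  rcases le_total a 0 with ha | ha
  · exact (mul_nonpos_of_nonpos_of_nonneg ha (exp_pos a).le).trans (by positivity)
  · exact mul_le_mul hab (exp_le_exp.mpr hab) (exp_pos a).le hb

lemma exp_neg_sq_div_le {ε y : ℝ} (hε : 0 < ε) (hy : 0 < y)
    (h : 2 / (π * ε ^ 2) ≤ 2 * y ^ 2 * exp (2 * y ^ 2)) :
    exp (-y ^ 2) / (√π * y) ≤ ε := by
  have hsq : (exp (-y ^ 2) / (√π * y)) ^ 2 ≤ ε ^ 2 := by
    have hexp : exp (-y ^ 2) ^ 2 * exp (2 * y ^ 2) = 1 := by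
      rw [← exp_nat_mul, ← exp_add]; norm_num
    rw [div_le_iff₀ (by positivity)] at h
    rw [div_pow, mul_pow, sq_sqrt pi_pos.le, div_le_iff₀ (by positivity)]
    nlinarith [exp_pos (2 * y ^ 2), exp_pos (-y ^ 2)]
  exact (pow_le_pow_iff_left₀ (by positivity) hε.le two_ne_zero).mp hsq

theorem sgn_erf_approx_general (ν ε k w : ℝ) (hν : 0 < ν) (hε : 0 < ε) (hk : 0 < k)
    (hw : w * Real.exp w = 2 / (Real.pi * ε ^ 2))
    (hk2 : w / (2 * ν ^ 2) ≤ k ^ 2) :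
    ∀ x : ℝ, ν ≤ |x| → |Real.sign x - erf (k * x)| ≤ ε := by
  intro x hx
  have hx0 : x ≠ 0 := abs_pos.mp (hν.trans_le hx)
  have hy : 0 < k * |x| := by positivity
  have hwy : w ≤ 2 * (k * |x|) ^ 2 := by
    rw [div_le_iff₀ (by positivity)] at hk2
    nlinarith [mul_le_mul hx hx hν.le (abs_nonneg x), sq_nonneg k]
  calc |Real.sign x - erf (k * x)| = |1 - erf (k * |x|)| := abs_sign_sub_erf_mul hx0
    _ ≤ exp (-(k * |x|) ^ 2) / (√π * (k * |x|)) := abs_one_sub_erf_le hy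
    _ ≤ ε := exp_neg_sq_div_le hε hy (hw ▸ mul_exp_le_mul_exp hwy (by positivity))

/-- If `k² ≥ W(2/(πε²))/(2ν²)`, where `W` is the principal Lambert W function
(characterized by `w·e^w = 2/(πε²)` with `w ≥ 0`), then
`|sgn(x) − erf(kx)| ≤ ε` whenever `|x| ≥ ν`. -/
theorem sgn_erf_approx (ν ε k w : ℝ) (hν : 0 < ν) (hε : 0 < ε) (hk : 0 < k)
    (hw : w * Real.exp w = 2 / (Real.pi * ε ^ 2)) (hw0 : 0 ≤ w)
    (hk2 : w / (2 * ν ^ 2) ≤ k ^ 2) :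
    ∀ x : ℝ, ν ≤ |x| → |Real.sign x - erf (k * x)| ≤ ε :=
  sgn_erf_approx_general ν ε k w hν hε hk hw hk2
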